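/- Let λ : C → A be convolution invertible with convolution inverse λ⁻¹ (i.e. λ(c₁)λ⁻¹(c₂) = λ⁻¹(c₁)λ(c₂) = ε(c)1_A for all c ∈ C). Then the following assertions are equivalent: (1) λ ∈ Q'; (2) for all c ∈ C: λ⁻¹(c₁) λ(c₃)_ψ ⊗ (c₂)^ψ = ε(c)1_A ⊗ x in A ⊗_k C; (3) for all c ∈ C: λ⁻¹(c₁) ⊗ c₂ = λ⁻¹(c)_ψ ⊗ x^ψ in A ⊗_k C (i.e. λ⁻¹ is right C-colinear). -/

import Mathlib

open TensorProduct

noncomputable section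

variable {k A C : Type*} [CommRing k] [Ring A] [Algebra k A]
  [AddCommGroup C] [Module k C] [Coalgebra k C]

/-- An entwining structure `(A, C, ψ)`. -/
structure IsEntwining (k : Type*) {A C : Type*} [CommRing k] [Ring A] [Algebra k A]
    [AddCommGroup C] [Module k C] [Coalgebra k C]
    (ψ : C ⊗[k] A →ₗ[k] A ⊗[k] C) : Prop where
  mul_compat : ψ ∘ₗ LinearMap.lTensor C (LinearMap.mul' k A) =
    LinearMap.rTensor C (LinearMap.mul' k A) ∘ₗ (TensorProduct.assoc k A A C).symm.toLinearMap ∘ₗ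
      LinearMap.lTensor A ψ ∘ₗ (TensorProduct.assoc k A C A).toLinearMap ∘ₗ
      LinearMap.rTensor A ψ ∘ₗ (TensorProduct.assoc k C A A).symm.toLinearMap
  one_compat : ∀ c : C, ψ (c ⊗ₜ[k] 1) = 1 ⊗ₜ[k] c
  comul_compat : LinearMap.lTensor A Coalgebra.comul ∘ₗ ψ =
    (TensorProduct.assoc k A C C).toLinearMap ∘ₗ LinearMap.rTensor C ψ ∘ₗ
      (TensorProduct.assoc k C A C).symm.toLinearMap ∘ₗ LinearMap.lTensor C ψ ∘ₗ
      (TensorProduct.assoc k C C A).toLinearMap ∘ₗ LinearMap.rTensor A Coalgebra.comul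
  counit_compat : ∀ (c : C) (a : A),
    TensorProduct.rid k A (LinearMap.lTensor A Coalgebra.counit (ψ (c ⊗ₜ[k] a))) =
      (Coalgebra.counit (R := k) c) • a

/-- The smash product multiplication on `Hom_k(C,A)`: `(f # g)(c) = f(c₂)_ψ g((c₁)^ψ)`. -/
def smashMul (ψ : C ⊗[k] A →ₗ[k] A ⊗[k] C) (f g : C →ₗ[k] A) : C →ₗ[k] A :=
  LinearMap.mul' k A ∘ₗ LinearMap.lTensor A g ∘ₗ ψ ∘ₗ LinearMap.lTensor C f ∘ₗ Coalgebra.comul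

/-- The unit of `#(C,A)`: `c ↦ ε(c) 1_A`. -/
def smashOne (k : Type*) (A C : Type*) [CommRing k] [Ring A] [Algebra k A]
    [AddCommGroup C] [Module k C] [Coalgebra k C] : C →ₗ[k] A :=
  Algebra.linearMap k A ∘ₗ Coalgebra.counit

/-- The ring morphism `i : A → #(C,A)`, `i(a)(c) = ε(c) a`. -/
def smashIota (k : Type*) {A : Type*} (C : Type*) [CommRing k] [Ring A] [Algebra k A]
    [AddCommGroup C] [Module k C] [Coalgebra k C] (a : A) : C →ₗ[k] A :=
  (Coalgebra.counit : C →ₗ[k] k).smulRight a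


/-- Convolution product on `Hom_k(C,A)`: `(f * g)(c) = f(c₁) g(c₂)`. -/
def conv (f g : C →ₗ[k] A) : C →ₗ[k] A :=
  LinearMap.mul' k A ∘ₗ TensorProduct.map f g ∘ₗ Coalgebra.comul

/-- `q ∈ Q'` iff `q(c₂)_ψ ⊗ (c₁)^ψ = q(c) ⊗ x` for all `c`. -/
def QprimeCond (ψ : C ⊗[k] A →ₗ[k] A ⊗[k] C) (x : C) (q : C →ₗ[k] A) : Prop :=
  ∀ c : C, ψ (LinearMap.lTensor C q (Coalgebra.comul c)) = q c ⊗ₜ[k] x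

/-- The map `c ↦ λ⁻¹(c₁) λ(c₃)_ψ ⊗ (c₂)^ψ`. -/
def lam3 (ψ : C ⊗[k] A →ₗ[k] A ⊗[k] C) (lam lamInv : C →ₗ[k] A) : C →ₗ[k] A ⊗[k] C :=
  LinearMap.rTensor C (LinearMap.mul' k A) ∘ₗ (TensorProduct.assoc k A A C).symm.toLinearMap ∘ₗ
    LinearMap.rTensor (A ⊗[k] C) lamInv ∘ₗ
    LinearMap.lTensor C (ψ ∘ₗ LinearMap.lTensor C lam) ∘ₗ
    LinearMap.lTensor C Coalgebra.comul ∘ₗ Coalgebra.comul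

/-!
`Hom(C, A ⊗ C)` is a left module over the convolution algebra `Hom(C, A)` via
`(f ▷ g)(c) = f(c₁) g(c₂)`, and a right module via `(g ◁ f)(c) = g(c₁) f(c₂)`, where `A` acts on
`A ⊗ C` from the right through the entwining, `(a ⊗ d) b = a b_ψ ⊗ d^ψ`; the entwining axioms for
products and for `1` say exactly that this is an action. Put `Q(c) = ψ(c₁ ⊗ λ(c₂))`,
`T(c) = ε(c) 1 ⊗ x` and `R(c) = λ⁻¹(c₁) ⊗ c₂`. Then (1) reads `Q = λ ▷ T`, (2) reads `λ⁻¹ ▷ Q = T`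
and, by associativity of the two actions, also `R ◁ λ = T`, while (3) reads `R = T ◁ λ⁻¹`. Both
equivalences therefore say that acting by `λ` and acting by `λ⁻¹` are mutually inverse.
-/

section Convolution

variable {W X Y Z U V : Type*}
  [AddCommGroup W] [Module k W] [AddCommGroup X] [Module k X] [AddCommGroup Y] [Module k Y]
  [AddCommGroup Z] [Module k Z] [AddCommGroup U] [Module k U] [AddCommGroup V] [Module k V]

def convWith (μ : X ⊗[k] Y →ₗ[k] Z) (f : C →ₗ[k] X) (g : C →ₗ[k] Y) : C →ₗ[k] Z :=
  μ ∘ₗ TensorProduct.map f g ∘ₗ Coalgebra.comul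

theorem convWith_assoc (μ₁ : X ⊗[k] Y →ₗ[k] Z) (μ₂ : W ⊗[k] Z →ₗ[k] V)
    (ν₁ : W ⊗[k] X →ₗ[k] U) (ν₂ : U ⊗[k] Y →ₗ[k] V)
    (hμν : ∀ w x y, μ₂ (w ⊗ₜ μ₁ (x ⊗ₜ y)) = ν₂ (ν₁ (w ⊗ₜ x) ⊗ₜ y))
    (f : C →ₗ[k] W) (g : C →ₗ[k] X) (h : C →ₗ[k] Y) :
    convWith μ₂ f (convWith μ₁ g h) = convWith ν₂ (convWith ν₁ f g) h := by
  have hμν' : μ₂ ∘ₗ TensorProduct.map f (μ₁ ∘ₗ TensorProduct.map g h) ∘ₗ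
      (TensorProduct.assoc k C C C).toLinearMap =
        ν₂ ∘ₗ TensorProduct.map (ν₁ ∘ₗ TensorProduct.map f g) h := by
    apply TensorProduct.ext_threefold
    intro a b c
    simp [hμν]
  calc convWith μ₂ f (convWith μ₁ g h)
      = μ₂ ∘ₗ TensorProduct.map f (μ₁ ∘ₗ TensorProduct.map g h) ∘ₗ
          (LinearMap.lTensor C Coalgebra.comul ∘ₗ Coalgebra.comul) := by
        rw [← LinearMap.comp_assoc _ (LinearMap.lTensor C _), LinearMap.map_comp_lTensor]; rfl
    _ = (μ₂ ∘ₗ TensorProduct.map f (μ₁ ∘ₗ TensorProduct.map g h) ∘ₗ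
          (TensorProduct.assoc k C C C).toLinearMap) ∘ₗ
          (LinearMap.rTensor C Coalgebra.comul ∘ₗ Coalgebra.comul) := by
        rw [← Coalgebra.coassoc]; rfl
    _ = ν₂ ∘ₗ (TensorProduct.map (ν₁ ∘ₗ TensorProduct.map f g) h ∘ₗ
          LinearMap.rTensor C Coalgebra.comul) ∘ₗ Coalgebra.comul := by
        rw [hμν']; rfl
    _ = convWith ν₂ (convWith ν₁ f g) h := by
        rw [LinearMap.map_comp_rTensor]; rfl

theorem convWith_counit_smulRight_left (μ : X ⊗[k] Y →ₗ[k] Z) (x : X) (g : C →ₗ[k] Y)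
    (c : C) : convWith μ ((Coalgebra.counit : C →ₗ[k] k).smulRight x) g c = μ (x ⊗ₜ g c) := by
  have : TensorProduct.map ((Coalgebra.counit : C →ₗ[k] k).smulRight x) g =
      TensorProduct.map (LinearMap.toSpanSingleton k X x) g ∘ₗ
        LinearMap.rTensor C Coalgebra.counit := by
    rw [LinearMap.map_comp_rTensor]; rfl
  simp only [convWith, LinearMap.comp_apply, this, Coalgebra.rTensor_counit_comul,
    TensorProduct.map_tmul, LinearMap.toSpanSingleton_apply, one_smul]

theorem convWith_counit_smulRight_right (μ : X ⊗[k] Y →ₗ[k] Z) (f : C →ₗ[k] X) (y : Y)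
    (c : C) : convWith μ f ((Coalgebra.counit : C →ₗ[k] k).smulRight y) c = μ (f c ⊗ₜ y) := by
  have : TensorProduct.map f ((Coalgebra.counit : C →ₗ[k] k).smulRight y) =
      TensorProduct.map f (LinearMap.toSpanSingleton k Y y) ∘ₗ
        LinearMap.lTensor C Coalgebra.counit := by
    rw [LinearMap.map_comp_lTensor]; rfl
  simp only [convWith, LinearMap.comp_apply, this, Coalgebra.lTensor_counit_comul,
    TensorProduct.map_tmul, LinearMap.toSpanSingleton_apply, one_smul]

end Convolution

section ConvolutionAction

variable {M : Type*} [AddCommGroup M] [Module k M]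

theorem convWith_conv_left {μ : A ⊗[k] M →ₗ[k] M}
    (hmul : ∀ a b m, μ ((a * b) ⊗ₜ m) = μ (a ⊗ₜ μ (b ⊗ₜ m)))
    (f f' : C →ₗ[k] A) (g : C →ₗ[k] M) :
    convWith μ (conv f f') g = convWith μ f (convWith μ f' g) :=
  (convWith_assoc _ _ _ _ (fun a b m => (hmul a b m).symm) f f' g).symm

theorem convWith_conv_right {μ : M ⊗[k] A →ₗ[k] M}
    (hmul : ∀ m a b, μ (m ⊗ₜ (a * b)) = μ (μ (m ⊗ₜ a) ⊗ₜ b))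
    (g : C →ₗ[k] M) (f f' : C →ₗ[k] A) :
    convWith μ g (conv f f') = convWith μ (convWith μ g f) f' :=
  convWith_assoc _ _ _ _ hmul g f f'

theorem convWith_counit_smulRight_one_left {μ : A ⊗[k] M →ₗ[k] M}
    (hone : ∀ m, μ (1 ⊗ₜ m) = m) (g : C →ₗ[k] M) :
    convWith μ ((Coalgebra.counit : C →ₗ[k] k).smulRight 1) g = g :=
  LinearMap.ext fun c => by rw [convWith_counit_smulRight_left, hone]

theorem convWith_counit_smulRight_one_right {μ : M ⊗[k] A →ₗ[k] M}
    (hone : ∀ m, μ (m ⊗ₜ 1) = m) (g : C →ₗ[k] M) :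
    convWith μ g ((Coalgebra.counit : C →ₗ[k] k).smulRight 1) = g :=
  LinearMap.ext fun c => by rw [convWith_counit_smulRight_right, hone]

variable {f f' : C →ₗ[k] A}

theorem eq_convWith_iff_convWith_eq {μ : A ⊗[k] M →ₗ[k] M}
    (hone : ∀ m, μ (1 ⊗ₜ m) = m) (hmul : ∀ a b m, μ ((a * b) ⊗ₜ m) = μ (a ⊗ₜ μ (b ⊗ₜ m)))
    (hff' : conv f f' = (Coalgebra.counit : C →ₗ[k] k).smulRight 1)
    (hf'f : conv f' f = (Coalgebra.counit : C →ₗ[k] k).smulRight 1) {g h : C →ₗ[k] M} :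
    g = convWith μ f h ↔ convWith μ f' g = h := by
  constructor
  · rintro rfl
    rw [← convWith_conv_left hmul, hf'f, convWith_counit_smulRight_one_left hone]
  · rintro rfl
    rw [← convWith_conv_left hmul, hff', convWith_counit_smulRight_one_left hone]

theorem convWith_eq_iff_eq_convWith {μ : M ⊗[k] A →ₗ[k] M}
    (hone : ∀ m, μ (m ⊗ₜ 1) = m) (hmul : ∀ m a b, μ (m ⊗ₜ (a * b)) = μ (μ (m ⊗ₜ a) ⊗ₜ b))
    (hff' : conv f f' = (Coalgebra.counit : C →ₗ[k] k).smulRight 1)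
    (hf'f : conv f' f = (Coalgebra.counit : C →ₗ[k] k).smulRight 1) {g h : C →ₗ[k] M} :
    convWith μ g f = h ↔ g = convWith μ h f' := by
  constructor
  · rintro rfl
    rw [← convWith_conv_right hmul, hff', convWith_counit_smulRight_one_right hone]
  · rintro rfl
    rw [← convWith_conv_right hmul, hf'f, convWith_counit_smulRight_one_right hone]

end ConvolutionAction

section EntwinedAction

variable {R B N : Type*} [CommRing R] [Ring B] [Algebra R B] [AddCommGroup N] [Module R N]

variable (R B N) in
def leftMul : B ⊗[R] (B ⊗[R] N) →ₗ[R] B ⊗[R] N :=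
  LinearMap.rTensor N (LinearMap.mul' R B) ∘ₗ (TensorProduct.assoc R B B N).symm.toLinearMap

theorem leftMul_tmul (a : B) (t : B ⊗[R] N) : leftMul R B N (a ⊗ₜ t) = a • t := by
  induction t using TensorProduct.induction_on with
  | zero => simp
  | tmul b d => simp [leftMul, TensorProduct.smul_tmul']
  | add u v hu hv => simp only [tmul_add, map_add, smul_add, hu, hv]

theorem leftMul_one_tmul (t : B ⊗[R] N) : leftMul R B N (1 ⊗ₜ t) = t := by
  rw [leftMul_tmul, one_smul]

theorem leftMul_mul_tmul (a b : B) (t : B ⊗[R] N) :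
    leftMul R B N ((a * b) ⊗ₜ t) = leftMul R B N (a ⊗ₜ leftMul R B N (b ⊗ₜ t)) := by
  simp only [leftMul_tmul, mul_smul]

variable (ψ : N ⊗[R] B →ₗ[R] B ⊗[R] N)

def entwinedMul : (B ⊗[R] N) ⊗[R] B →ₗ[R] B ⊗[R] N :=
  leftMul R B N ∘ₗ LinearMap.lTensor B ψ ∘ₗ (TensorProduct.assoc R B N B).toLinearMap

theorem entwinedMul_tmul_tmul (a : B) (d : N) (b : B) :
    entwinedMul ψ ((a ⊗ₜ d) ⊗ₜ b) = a • ψ (d ⊗ₜ b) := by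
  simp [entwinedMul, leftMul_tmul]

theorem entwinedMul_smul_tmul (a : B) (t : B ⊗[R] N) (b : B) :
    entwinedMul ψ ((a • t) ⊗ₜ b) = a • entwinedMul ψ (t ⊗ₜ b) := by
  induction t using TensorProduct.induction_on with
  | zero => simp
  | tmul a' d =>
    rw [TensorProduct.smul_tmul', entwinedMul_tmul_tmul, entwinedMul_tmul_tmul, smul_eq_mul,
      mul_smul]
  | add u v hu hv => simp only [smul_add, add_tmul, map_add, hu, hv]

end EntwinedAction

section Entwining

variable {ψ : C ⊗[k] A →ₗ[k] A ⊗[k] C}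

theorem IsEntwining.apply_tmul_mul (hψ : IsEntwining k ψ) (d : C) (a b : A) :
    ψ (d ⊗ₜ (a * b)) = entwinedMul ψ (ψ (d ⊗ₜ a) ⊗ₜ b) :=
  LinearMap.congr_fun hψ.mul_compat (d ⊗ₜ (a ⊗ₜ b))

theorem IsEntwining.entwinedMul_tmul_mul (hψ : IsEntwining k ψ) (t : A ⊗[k] C) (a b : A) :
    entwinedMul ψ (t ⊗ₜ (a * b)) = entwinedMul ψ (entwinedMul ψ (t ⊗ₜ a) ⊗ₜ b) := by
  induction t using TensorProduct.induction_on with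
  | zero => simp
  | tmul a' d =>
    rw [entwinedMul_tmul_tmul, entwinedMul_tmul_tmul, hψ.apply_tmul_mul, entwinedMul_smul_tmul]
  | add u v hu hv => simp only [add_tmul, map_add, hu, hv]

theorem IsEntwining.entwinedMul_tmul_one (hψ : IsEntwining k ψ) (t : A ⊗[k] C) :
    entwinedMul ψ (t ⊗ₜ 1) = t := by
  induction t using TensorProduct.induction_on with
  | zero => simp
  | tmul a d =>
    rw [entwinedMul_tmul_tmul, hψ.one_compat, TensorProduct.smul_tmul', smul_eq_mul, mul_one]
  | add u v hu hv => simp only [add_tmul, map_add, hu, hv]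

variable (ψ)

theorem lam3_eq_convWith_leftMul (lam lamInv : C →ₗ[k] A) :
    lam3 ψ lam lamInv = convWith (leftMul k A C) lamInv (convWith ψ LinearMap.id lam) := by
  rw [lam3, convWith, convWith, ← LinearMap.rTensor_comp_lTensor]
  simp only [LinearMap.lTensor_comp, LinearMap.comp_assoc]
  rfl

theorem lam3_eq_convWith_entwinedMul (lam lamInv : C →ₗ[k] A) :
    lam3 ψ lam lamInv =
      convWith (entwinedMul ψ) (convWith LinearMap.id lamInv LinearMap.id) lam := by
  rw [lam3_eq_convWith_leftMul]
  exact convWith_assoc _ _ _ _ (fun a d b => rfl) _ _ _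

theorem qprimeCond_iff_eq_convWith (x : C) (q : C →ₗ[k] A) :
    QprimeCond ψ x q ↔ convWith ψ LinearMap.id q =
      convWith (leftMul k A C) q ((Coalgebra.counit : C →ₗ[k] k).smulRight ((1 : A) ⊗ₜ[k] x)) := by
  refine (forall_congr' fun c => ?_).trans LinearMap.ext_iff.symm
  rw [convWith_counit_smulRight_right, leftMul_tmul, TensorProduct.smul_tmul', smul_eq_mul,
    mul_one]
  rfl

theorem forall_rTensor_comul_eq_iff (x : C) (f : C →ₗ[k] A) :
    (∀ c, LinearMap.rTensor C f (Coalgebra.comul c) = ψ (x ⊗ₜ[k] f c)) ↔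
      convWith LinearMap.id f LinearMap.id =
        convWith (entwinedMul ψ)
          ((Coalgebra.counit : C →ₗ[k] k).smulRight ((1 : A) ⊗ₜ[k] x)) f := by
  refine (forall_congr' fun c => ?_).trans LinearMap.ext_iff.symm
  rw [convWith_counit_smulRight_left, entwinedMul_tmul_tmul, one_smul]
  rfl

end Entwining

theorem cleft_lambda_tfae (ψ : C ⊗[k] A →ₗ[k] A ⊗[k] C) (hψ : IsEntwining k ψ)
    (x : C)
    (lam lamInv : C →ₗ[k] A)
    (hinv1 : ∀ c : C, conv lam lamInv c = (Coalgebra.counit (R := k) c) • (1 : A))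
    (hinv2 : ∀ c : C, conv lamInv lam c = (Coalgebra.counit (R := k) c) • (1 : A)) :
    (QprimeCond ψ x lam ↔
      (∀ c : C, lam3 ψ lam lamInv c =
        (Coalgebra.counit (R := k) c) • ((1 : A) ⊗ₜ[k] x))) ∧
    ((∀ c : C, lam3 ψ lam lamInv c =
        (Coalgebra.counit (R := k) c) • ((1 : A) ⊗ₜ[k] x)) ↔
      (∀ c : C, LinearMap.rTensor C lamInv (Coalgebra.comul c) = ψ (x ⊗ₜ[k] lamInv c))) := by
  have hconv₁ : conv lam lamInv = (Coalgebra.counit : C →ₗ[k] k).smulRight 1 :=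
    LinearMap.ext hinv1
  have hconv₂ : conv lamInv lam = (Coalgebra.counit : C →ₗ[k] k).smulRight 1 :=
    LinearMap.ext hinv2
  have h2 : (∀ c : C, lam3 ψ lam lamInv c = (Coalgebra.counit (R := k) c) • ((1 : A) ⊗ₜ[k] x)) ↔
      lam3 ψ lam lamInv = (Coalgebra.counit : C →ₗ[k] k).smulRight ((1 : A) ⊗ₜ[k] x) :=
    ⟨fun h => LinearMap.ext h, fun h => LinearMap.congr_fun h⟩
  rw [h2, qprimeCond_iff_eq_convWith, forall_rTensor_comul_eq_iff]
  constructor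
  · rw [lam3_eq_convWith_leftMul]
    exact eq_convWith_iff_convWith_eq leftMul_one_tmul leftMul_mul_tmul hconv₁ hconv₂
  · rw [lam3_eq_convWith_entwinedMul]
    exact convWith_eq_iff_eq_convWith hψ.entwinedMul_tmul_one hψ.entwinedMul_tmul_mul hconv₁ hconv₂
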